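/- Let X and Y be isometrically homogeneous boundedly-finite metric spaces of asymptotic dimension zero (so all connected components C_ε(x) are finite). If φ : X → Y is a bi-uniform equivalence, then for every prime p and k ∈ ℕ: if p^k divides |C_ε(x)| for some ε < ∞ and x ∈ X, then p^k divides |C_δ(y)| for some δ < ∞ and y ∈ Y. In particular f_X = f_Y. -/

import Mathlib

/-!
A macro-uniform bijection `φ` maps each `ε`-component into a single `δ`-component, so the
preimage of a `δ`-component of `Y` is a union of `ε`-components of `X`. By homogeneity these all
have the same size, hence `|C_ε(x)|` divides `|C_δ(φ x)|`. Applying this to `φ` and to `φ⁻¹`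
transfers every prime power dividing a component size in either direction.
-/

/-- The `s`-connected component of `x`. -/
def chainComp {X : Type*} [MetricSpace X] (s : ℝ) (x : X) : Set X :=
  {y | Relation.ReflTransGen (fun a b => dist a b ≤ s) x y}

theorem Set.dvd_ncard_of_ncard_fiber_eq {α β : Type*} {f : α → β} {S : Set α} {n : ℕ}
    (hS : ∀ a ∈ S, f ⁻¹' {f a} ⊆ S) (hn : ∀ a ∈ S, (f ⁻¹' {f a}).ncard = n) :
    n ∣ S.ncard := by
  classical
  obtain hinf | hfin := S.infinite_or_finite
  · simp [hinf.ncard]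
  rw [ncard_eq_toFinset_card _ hfin, Finset.card_eq_sum_card_image f,
    Finset.sum_const_nat (m := n)]
  · exact dvd_mul_left _ _
  simp only [Finset.mem_image, Finite.mem_toFinset]
  rintro _ ⟨a, ha, rfl⟩
  rw [← hn a ha, ← ncard_coe_finset, Finset.coe_filter]
  congr 1
  ext b
  simpa using fun hb => hS a ha hb

section

variable {X Y : Type*} [MetricSpace X] [MetricSpace Y] {s ε δ : ℝ} {x y : X}

theorem mem_chainComp_self (s : ℝ) (x : X) : x ∈ chainComp s x :=
  Relation.ReflTransGen.refl

theorem mem_chainComp_comm : y ∈ chainComp s x ↔ x ∈ chainComp s y := by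
  have : Std.Symm fun a b : X => dist a b ≤ s := ⟨fun a b h => (dist_comm b a).trans_le h⟩
  exact ⟨Std.Symm.symm _ _, Std.Symm.symm _ _⟩

theorem chainComp_eq_iff_mem : chainComp s y = chainComp s x ↔ y ∈ chainComp s x := by
  refine ⟨fun h => h ▸ mem_chainComp_self s y, fun h => Set.ext fun z => ?_⟩
  exact ⟨fun hz => Relation.ReflTransGen.trans h hz,
    fun hz => Relation.ReflTransGen.trans (mem_chainComp_comm.mp h) hz⟩

theorem mapsTo_chainComp {φ : X → Y}
    (hφ : ∀ a b, dist a b ≤ ε → dist (φ a) (φ b) ≤ δ) (x : X) :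
    Set.MapsTo φ (chainComp ε x) (chainComp δ (φ x)) :=
  fun _ hz => Relation.ReflTransGen.lift φ hφ _ _ hz

theorem Isometry.image_chainComp {f : X → Y} (hf : Isometry f) (hsurj : f.Surjective)
    (s : ℝ) (x : X) : f '' chainComp s x = chainComp s (f x) := by
  refine (mapsTo_chainComp (fun a b h => (hf.dist_eq a b).trans_le h) x).image_subset.antisymm ?_
  intro y hy
  induction hy with
  | refl => exact Set.mem_image_of_mem f (mem_chainComp_self s x)
  | tail _ hbc ih =>
    obtain ⟨b, hb, rfl⟩ := ih
    obtain ⟨c, rfl⟩ := hsurj ‹_›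
    exact ⟨c, hb.tail ((hf.dist_eq b c).symm.trans_le hbc), rfl⟩

theorem ncard_chainComp_eq_of_homogeneous
    (hhom : ∀ x y : X, ∃ f : X → X, Function.Bijective f ∧ Isometry f ∧ f x = y)
    (s : ℝ) (x y : X) : (chainComp s y).ncard = (chainComp s x).ncard := by
  obtain ⟨f, hf, hiso, rfl⟩ := hhom x y
  rw [← hiso.image_chainComp hf.surjective, Set.ncard_image_of_injective _ hf.injective]

theorem ncard_chainComp_dvd_ncard_chainComp {φ : X → Y} (hφ : φ.Bijective)
    (hεδ : ∀ a b, dist a b ≤ ε → dist (φ a) (φ b) ≤ δ)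
    (hconst : ∀ a b : X, (chainComp ε a).ncard = (chainComp ε b).ncard) (x : X) :
    (chainComp ε x).ncard ∣ (chainComp δ (φ x)).ncard := by
  have hfiber (a : X) : chainComp ε ⁻¹' {chainComp ε a} = chainComp ε a :=
    Set.ext fun _ => chainComp_eq_iff_mem
  rw [← Set.ncard_preimage_of_injective_subset_range hφ.injective
    (hφ.surjective.range_eq ▸ Set.subset_univ _)]
  refine Set.dvd_ncard_of_ncard_fiber_eq (fun a ha => ?_) fun a _ => by rw [hfiber, hconst]
  rw [hfiber]
  exact fun b hb => Relation.ReflTransGen.trans ha (mapsTo_chainComp hεδ a hb)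

theorem exists_dvd_ncard_chainComp_of_bijective {φ : X → Y} (hφ : φ.Bijective)
    (hhom : ∀ x y : X, ∃ f : X → X, Function.Bijective f ∧ Isometry f ∧ f x = y)
    (hmacro : ∀ ε, ∃ δ, ∀ a b, dist a b ≤ ε → dist (φ a) (φ b) ≤ δ) {m : ℕ}
    (h : ∃ (ε : ℝ) (x : X), m ∣ (chainComp ε x).ncard) :
    ∃ (δ : ℝ) (y : Y), m ∣ (chainComp δ y).ncard := by
  obtain ⟨ε, x, hm⟩ := h
  obtain ⟨δ, hδ⟩ := hmacro ε
  exact ⟨δ, φ x, hm.trans <| ncard_chainComp_dvd_ncard_chainComp hφ hδ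
    (fun a b => ncard_chainComp_eq_of_homogeneous hhom ε b a) x⟩

end

theorem biUniformEquiv_divisibility_general {X Y : Type*} [MetricSpace X] [MetricSpace Y]
    (hhomX : ∀ x y : X, ∃ f : X → X, Function.Bijective f ∧ Isometry f ∧ f x = y)
    (hhomY : ∀ x y : Y, ∃ f : Y → Y, Function.Bijective f ∧ Isometry f ∧ f x = y)
    (φ : X → Y) (hbij : Function.Bijective φ)
    (hmacro : ∀ δ : ℝ, ∃ ε : ℝ, ∀ a b : X, dist a b ≤ δ → dist (φ a) (φ b) ≤ ε)
    (hmacroInv : ∀ δ : ℝ, ∃ ε : ℝ, ∀ a b : X, dist (φ a) (φ b) ≤ δ → dist a b ≤ ε)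
    (p : ℕ) (k : ℕ) :
    ((∃ (ε : ℝ) (x : X), p ^ k ∣ (chainComp ε x).ncard) →
      ∃ (δ : ℝ) (y : Y), p ^ k ∣ (chainComp δ y).ncard) ∧
    {n : ℕ | ∃ (ε : ℝ) (x : X), p ^ n ∣ (chainComp ε x).ncard} =
      {n : ℕ | ∃ (δ : ℝ) (y : Y), p ^ n ∣ (chainComp δ y).ncard} := by
  set e := Equiv.ofBijective φ hbij
  have hmacroSymm :
      ∀ δ, ∃ ε, ∀ a b : Y, dist a b ≤ δ → dist (e.symm a) (e.symm b) ≤ ε :=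
    fun δ => (hmacroInv δ).imp fun _ h a b hab => h _ _ <| by
      rwa [Equiv.ofBijective_apply_symm_apply φ hbij, Equiv.ofBijective_apply_symm_apply φ hbij]
  have fwd (n : ℕ) := exists_dvd_ncard_chainComp_of_bijective hbij hhomX hmacro (m := p ^ n)
  have bwd (n : ℕ) :=
    exists_dvd_ncard_chainComp_of_bijective e.symm.bijective hhomY hmacroSymm (m := p ^ n)
  exact ⟨fwd k, Set.ext fun n => ⟨fwd n, bwd n⟩⟩

/-- Let `X`, `Y` be isometrically homogeneous, boundedly-finite metric spaces of
asymptotic dimension zero (so all connected components are finite), and let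
`φ : X → Y` be a bi-uniform equivalence. Then for every prime `p` and `k ∈ ℕ`:
if `p^k` divides `|C_ε(x)|` for some `ε < ∞` and `x ∈ X`, then `p^k` divides
`|C_δ(y)|` for some `δ < ∞` and `y ∈ Y`. In particular `f_X = f_Y`. -/
theorem biUniformEquiv_divisibility {X Y : Type*} [MetricSpace X] [MetricSpace Y]
    (hbfX : ∀ B : Set X, Bornology.IsBounded B → B.Finite)
    (hbfY : ∀ B : Set Y, Bornology.IsBounded B → B.Finite)
    (hdimX : ∀ ε : ℝ, ∃ m : ℝ, ∀ x y : X, y ∈ chainComp ε x → dist x y ≤ m)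
    (hdimY : ∀ ε : ℝ, ∃ m : ℝ, ∀ x y : Y, y ∈ chainComp ε x → dist x y ≤ m)
    (hhomX : ∀ x y : X, ∃ f : X → X, Function.Bijective f ∧ Isometry f ∧ f x = y)
    (hhomY : ∀ x y : Y, ∃ f : Y → Y, Function.Bijective f ∧ Isometry f ∧ f x = y)
    (φ : X → Y) (hbij : Function.Bijective φ)
    (hmicro : ∀ ε : ℝ, 0 < ε → ∃ δ : ℝ, 0 < δ ∧
      ∀ a b : X, dist a b ≤ δ → dist (φ a) (φ b) ≤ ε)
    (hmacro : ∀ δ : ℝ, ∃ ε : ℝ, ∀ a b : X, dist a b ≤ δ → dist (φ a) (φ b) ≤ ε)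
    (hmicroInv : ∀ ε : ℝ, 0 < ε → ∃ δ : ℝ, 0 < δ ∧
      ∀ a b : X, dist (φ a) (φ b) ≤ δ → dist a b ≤ ε)
    (hmacroInv : ∀ δ : ℝ, ∃ ε : ℝ, ∀ a b : X, dist (φ a) (φ b) ≤ δ → dist a b ≤ ε)
    (p : ℕ) (hp : p.Prime) (k : ℕ) :
    ((∃ (ε : ℝ) (x : X), p ^ k ∣ (chainComp ε x).ncard) →
      ∃ (δ : ℝ) (y : Y), p ^ k ∣ (chainComp δ y).ncard) ∧
    {n : ℕ | ∃ (ε : ℝ) (x : X), p ^ n ∣ (chainComp ε x).ncard} =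
      {n : ℕ | ∃ (δ : ℝ) (y : Y), p ^ n ∣ (chainComp δ y).ncard} :=
  biUniformEquiv_divisibility_general hhomX hhomY φ hbij hmacro hmacroInv p k
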